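/- arXiv:1611.06140 — 6 statements merged into one kernel-verified Lean document; each statement's English description precedes it below -/
import Mathlib

section
/- Let M, N ∈ ℂ^{n×n} be such that M* N + N* M is positive semidefinite (where * denotes conjugate transpose), and suppose there exist U, V ∈ ℂ^{n×n} with U M + V N = I. Then M + N is nonsingular. -/
/-!
If `(M + N) z = 0` then `N z = -M z`, so the quadratic form of `Mᴴ N + Nᴴ M` at `z` equals
`-2 ‖M z‖²`. Positive semidefiniteness forces `M z = 0`, hence `N z = 0`, and then
`z = (U M + V N) z = 0`.
-/

open Matrix
open scoped ComplexOrder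

namespace Matrix

variable {ι : Type*} [Fintype ι]

theorem star_dotProduct_conjTranspose_mul_mulVec {R : Type*} [CommRing R] [StarRing R]
    (A B : Matrix ι ι R) (z : ι → R) :
    star z ⬝ᵥ ((Aᴴ * B) *ᵥ z) = star (A *ᵥ z) ⬝ᵥ (B *ᵥ z) := by
  rw [← mulVec_mulVec, dotProduct_mulVec, star_mulVec]

theorem mulVec_eq_zero_of_posSemidef_of_add_mulVec_eq_zero {𝕜 : Type*} [RCLike 𝕜]
    {M N : Matrix ι ι 𝕜} (hpsd : (Mᴴ * N + Nᴴ * M).PosSemidef) {z : ι → 𝕜}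
    (hz : (M + N) *ᵥ z = 0) : M *ᵥ z = 0 := by
  have hN : N *ᵥ z = -(M *ᵥ z) := eq_neg_of_add_eq_zero_right (by rwa [← add_mulVec])
  set c := star (M *ᵥ z) ⬝ᵥ (M *ᵥ z)
  have hform : star z ⬝ᵥ ((Mᴴ * N + Nᴴ * M) *ᵥ z) = -(c + c) := by
    rw [add_mulVec, dotProduct_add, star_dotProduct_conjTranspose_mul_mulVec,
      star_dotProduct_conjTranspose_mul_mulVec, hN, star_neg, dotProduct_neg, neg_dotProduct,
      neg_add]
  have hc_nonneg : 0 ≤ c := dotProduct_star_self_nonneg _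
  have hcc : c + c ≤ 0 := neg_nonneg.mp (hform ▸ hpsd.dotProduct_mulVec_nonneg z)
  have hc_nonpos : c ≤ 0 := (add_le_iff_nonpos_right c).mp (hcc.trans hc_nonneg)
  exact dotProduct_star_self_eq_zero.mp (le_antisymm hc_nonpos hc_nonneg)

end Matrix

theorem stmt_2 (n : ℕ) (M N U V : Matrix (Fin n) (Fin n) ℂ)
    (hpsd : (Mᴴ * N + Nᴴ * M).PosSemidef)
    (hUV : U * M + V * N = 1) : IsUnit (M + N) := by
  refine mulVec_injective_iff_isUnit.mp <| (LinearMap.ker_eq_bot (f := (M + N).mulVecLin)).mp <|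
    ker_mulVecLin_eq_bot_iff.mpr fun z hz => ?_
  have hMz : M *ᵥ z = 0 := mulVec_eq_zero_of_posSemidef_of_add_mulVec_eq_zero hpsd hz
  have hNz : N *ᵥ z = 0 := by
    rw [add_comm] at hz hpsd
    exact mulVec_eq_zero_of_posSemidef_of_add_mulVec_eq_zero hpsd hz
  calc z = (U * M + V * N) *ᵥ z := by rw [hUV, one_mulVec]
    _ = 0 := by rw [add_mulVec, ← mulVec_mulVec, ← mulVec_mulVec, hMz, hNz, mulVec_zero,
      mulVec_zero, add_zero]
end

section
/- Let A, B ∈ ℂ^{n×n} satisfy: (i) A A* - B B* is positive semidefinite, and (ii) the n×2n matrix [B -A] has rank n. Then A is nonsingular. -/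
/-!
If `A` were singular, a nonzero row vector `v` with `v A = 0` would satisfy
`0 ≤ v (A A* - B B*) v* = -‖v B‖²`, so `v B = 0` as well. Then `v` annihilates `[B  -A]`,
contradicting that this matrix has full row rank `n`.
-/

open Matrix
open scoped ComplexOrder

namespace Matrix

variable {m n : Type*} [Fintype m] [Fintype n]

theorem vecMul_injective_of_rank_eq_card {K : Type*} [Field K] {M : Matrix m n K}
    (h : M.rank = Fintype.card m) : Function.Injective M.vecMul := by
  rw [vecMul_injective_iff, linearIndependent_iff_card_eq_finrank_span, ← h,
    rank_eq_finrank_span_row, Set.finrank]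

theorem dotProduct_mul_conjTranspose_mulVec_star {R : Type*} [CommSemiring R] [StarRing R]
    (M : Matrix m n R) (v : m → R) :
    v ⬝ᵥ (M * Mᴴ) *ᵥ star v = (v ᵥ* M) ⬝ᵥ star (v ᵥ* M) := by
  rw [← mulVec_mulVec, dotProduct_mulVec, mulVec_conjTranspose, star_star]

theorem vecMul_eq_zero_of_posSemidef_sub {R : Type*} [CommRing R] [PartialOrder R]
    [StarRing R] [StarOrderedRing R] [NoZeroDivisors R] {A B : Matrix m n R}
    (h : (A * Aᴴ - B * Bᴴ).PosSemidef) {v : m → R} (hv : v ᵥ* A = 0) : v ᵥ* B = 0 := by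
  have hnonneg := h.dotProduct_mulVec_nonneg (star v)
  rw [star_star, sub_mulVec, dotProduct_sub, dotProduct_mul_conjTranspose_mulVec_star,
    dotProduct_mul_conjTranspose_mulVec_star, hv, zero_dotProduct, zero_sub,
    neg_nonneg] at hnonneg
  exact dotProduct_self_star_eq_zero.mp
    (le_antisymm hnonneg (dotProduct_self_star_nonneg _))

end Matrix

theorem stmt_3 (n : ℕ) (A B : Matrix (Fin n) (Fin n) ℂ)
    (hpsd : (A * Aᴴ - B * Bᴴ).PosSemidef)
    (hrank : (Matrix.fromCols B (-A)).rank = n) : IsUnit A := by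
  rw [isUnit_iff_isUnit_det, isUnit_iff_ne_zero]
  intro hdet
  obtain ⟨v, hv, hvA⟩ := exists_vecMul_eq_zero_iff.mpr hdet
  have hvB := vecMul_eq_zero_of_posSemidef_sub hpsd hvA
  have hker : v ᵥ* fromCols B (-A) = 0 ᵥ* fromCols B (-A) := by
    rw [vecMul_fromCols, vecMul_neg, hvA, hvB, zero_vecMul, neg_zero, Sum.elim_zero_zero]
  exact hv (vecMul_injective_of_rank_eq_card (by rw [hrank, Fintype.card_fin]) hker)
end

section
/- Let P, Q, M, N ∈ ℂ^{n×n} with P M = Q N, let M + N be invertible, and set H := (N - M)(M + N)^{-1}. If I - H* H is positive semidefinite, then (P+Q)(P+Q)* - (P-Q)(P-Q)* is positive semidefinite, and hence P Q* + Q P* is positive semidefinite. -/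
/-!
`H` is a contraction, hence so is `Hᴴ`, i.e. `H Hᴴ ≤ 1`. From `P M = Q N` one gets
`(P + Q) H = P - Q`, so conjugating `1 - H Hᴴ ≥ 0` by `P + Q` gives
`(P + Q)(P + Q)ᴴ - (P - Q)(P - Q)ᴴ ≥ 0`, and this difference is `2 (P Qᴴ + Q Pᴴ)`.
-/

open Matrix
open scoped ComplexOrder

theorem CStarAlgebra.star_mul_self_le_one_iff {A : Type*} [CStarAlgebra A] [PartialOrder A]
    [StarOrderedRing A] (a : A) : star a * a ≤ 1 ↔ ‖a‖ ≤ 1 := by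
  rw [← norm_le_one_iff_of_nonneg _ (star_mul_self_nonneg a), CStarRing.norm_star_mul_self,
    ← sq, sq_le_one_iff₀ (norm_nonneg a)]

theorem CStarAlgebra.star_mul_self_le_one_iff_mul_star_self_le_one {A : Type*} [CStarAlgebra A]
    [PartialOrder A] [StarOrderedRing A] (a : A) : star a * a ≤ 1 ↔ a * star a ≤ 1 := by
  rw [star_mul_self_le_one_iff, ← norm_star a, ← star_mul_self_le_one_iff, star_star]

open scoped MatrixOrder Matrix.Norms.L2Operator in
theorem Matrix.posSemidef_one_sub_conjTranspose_mul_self_iff {n : Type*} [Fintype n]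
    [DecidableEq n] (A : Matrix n n ℂ) :
    (1 - Aᴴ * A).PosSemidef ↔ (1 - A * Aᴴ).PosSemidef :=
  CStarAlgebra.star_mul_self_le_one_iff_mul_star_self_le_one A

theorem Matrix.add_mul_sub_mul_add_inv_of_mul_eq_mul {m n R : Type*} [Fintype n] [DecidableEq n]
    [CommRing R] {P Q : Matrix m n R} {M N : Matrix n n R} (h : P * M = Q * N)
    (hMN : IsUnit (M + N)) : (P + Q) * ((N - M) * (M + N)⁻¹) = P - Q := by
  have hdet : IsUnit (M + N).det := (isUnit_iff_isUnit_det _).mp hMN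
  have : (P + Q) * (N - M) = (P - Q) * (M + N) := by
    simp only [Matrix.add_mul, Matrix.sub_mul, Matrix.mul_add, Matrix.mul_sub, h]
    abel
  rw [← Matrix.mul_assoc, this, Matrix.mul_assoc, mul_nonsing_inv _ hdet, Matrix.mul_one]

theorem Matrix.PosSemidef.mul_conjTranspose_self_sub_of_mul_eq {m n 𝕜 : Type*} [Fintype m]
    [Fintype n] [DecidableEq n] [RCLike 𝕜] {H : Matrix n n 𝕜} (hH : (1 - H * Hᴴ).PosSemidef)
    {X Y : Matrix m n 𝕜} (hXY : X * H = Y) : (X * Xᴴ - Y * Yᴴ).PosSemidef := by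
  convert hH.mul_mul_conjTranspose_same X using 1
  simp only [← hXY, conjTranspose_mul, Matrix.mul_sub, Matrix.sub_mul, Matrix.mul_one,
    Matrix.mul_assoc]

theorem Matrix.add_mul_conjTranspose_add_sub_sub_mul_conjTranspose_sub {m n R : Type*} [Fintype n]
    [CommRing R] [StarRing R] (P Q : Matrix m n R) :
    (P + Q) * (P + Q)ᴴ - (P - Q) * (P - Q)ᴴ = (2 : R) • (P * Qᴴ + Q * Pᴴ) := by
  simp only [conjTranspose_add, conjTranspose_sub, Matrix.add_mul, Matrix.sub_mul,
    Matrix.mul_add, Matrix.mul_sub, two_smul]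
  abel

theorem Matrix.PosSemidef.of_two_smul {n 𝕜 : Type*} [Fintype n] [RCLike 𝕜] {A : Matrix n n 𝕜}
    (h : ((2 : 𝕜) • A).PosSemidef) : A.PosSemidef := by
  simpa [smul_smul] using h.smul (a := (2⁻¹ : 𝕜)) (by simp)

theorem stmt_5 (n : ℕ) (P Q M N : Matrix (Fin n) (Fin n) ℂ)
    (hPMQN : P * M = Q * N) (hMN : IsUnit (M + N))
    (hH : (1 - ((N - M) * (M + N)⁻¹)ᴴ * ((N - M) * (M + N)⁻¹)).PosSemidef) :
    ((P + Q) * (P + Q)ᴴ - (P - Q) * (P - Q)ᴴ).PosSemidef ∧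
      (P * Qᴴ + Q * Pᴴ).PosSemidef := by
  have hD : ((P + Q) * (P + Q)ᴴ - (P - Q) * (P - Q)ᴴ).PosSemidef :=
    ((posSemidef_one_sub_conjTranspose_mul_self_iff _).mp hH).mul_conjTranspose_self_sub_of_mul_eq
      (add_mul_sub_mul_add_inv_of_mul_eq_mul hPMQN hMN)
  refine ⟨hD, .of_two_smul ?_⟩
  rwa [← add_mul_conjTranspose_add_sub_sub_mul_conjTranspose_sub]
end

section
/- Let A ∈ ℝ^{d×d}, B ∈ ℝ^{d×n}, C ∈ ℝ^{n×d}, D ∈ ℝ^{n×n} with D + Dᵀ positive definite. Let W ∈ ℝ^{n×n} be invertible with WᵀW = D + Dᵀ, let X be a real symmetric matrix, and set L := (Wᵀ)^{-1}(C - BᵀX). Then the following are equivalent: (a) -AᵀX - XA = LᵀL; (b) -AᵀX - XA - (Cᵀ - XB)(D+Dᵀ)^{-1}(C - BᵀX) = 0. Moreover, in either case the triple (X, L, W) satisfies -AᵀX - XA = LᵀL, C - BᵀX = WᵀL, and D + Dᵀ = WᵀW. -/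
open Matrix

theorem stmt_8 (d n : ℕ) (A : Matrix (Fin d) (Fin d) ℝ) (B : Matrix (Fin d) (Fin n) ℝ)
    (C : Matrix (Fin n) (Fin d) ℝ) (D : Matrix (Fin n) (Fin n) ℝ)
    (hD : (D + Dᵀ).PosDef)
    (W : Matrix (Fin n) (Fin n) ℝ) (hW : IsUnit W) (hWW : Wᵀ * W = D + Dᵀ)
    (X : Matrix (Fin d) (Fin d) ℝ) (hX : Xᵀ = X)
    (L : Matrix (Fin n) (Fin d) ℝ) (hL : L = (Wᵀ)⁻¹ * (C - Bᵀ * X)) :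
    ((-Aᵀ * X - X * A = Lᵀ * L) ↔
      (-Aᵀ * X - X * A - (Cᵀ - X * B) * (D + Dᵀ)⁻¹ * (C - Bᵀ * X) = 0)) ∧
    ((-Aᵀ * X - X * A = Lᵀ * L) →
      (-Aᵀ * X - X * A = Lᵀ * L ∧ C - Bᵀ * X = Wᵀ * L ∧ D + Dᵀ = Wᵀ * W)) := by
  have hWt : IsUnit Wᵀ := (Matrix.isUnit_iff_isUnit_det _).mpr
    (by rw [Matrix.det_transpose]; exact (Matrix.isUnit_iff_isUnit_det _).mp hW)
  have hLt : Lᵀ = (Cᵀ - X * B) * W⁻¹ := by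
    rw [hL, transpose_mul, transpose_sub, transpose_mul, transpose_transpose, hX,
      transpose_nonsing_inv, transpose_transpose]
  have hkey : Lᵀ * L = (Cᵀ - X * B) * (D + Dᵀ)⁻¹ * (C - Bᵀ * X) := by
    rw [hLt, hL, ← hWW, Matrix.mul_inv_rev]
    simp only [Matrix.mul_assoc]
  constructor
  · rw [hkey]
    constructor
    · intro h; rw [h, sub_self]
    · intro h; exact sub_eq_zero.mp h
  · intro h
    refine ⟨h, ?_, hWW.symm⟩
    rw [hL, Matrix.mul_nonsing_inv_cancel_left _ _ ((Matrix.isUnit_iff_isUnit_det _).mp hWt)]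
end

section
/- Let A ∈ ℝ^{d×d}, B ∈ ℝ^{d×n}, C ∈ ℝ^{n×d}, and let X, L, W be real matrices with X symmetric positive semidefinite, -AᵀX - XA = LᵀL, and C - BᵀX = WᵀL. If z ∈ ℝ^d satisfies Xz = 0, then for every natural number k: X A^k z = 0, L A^k z = 0, and C A^k z = 0. -/
open Matrix

lemma aux9 (d n : ℕ) (A : Matrix (Fin d) (Fin d) ℝ) (B : Matrix (Fin d) (Fin n) ℝ)
    (C : Matrix (Fin n) (Fin d) ℝ)
    (X : Matrix (Fin d) (Fin d) ℝ) (L : Matrix (Fin n) (Fin d) ℝ)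
    (W : Matrix (Fin n) (Fin n) ℝ)
    (hXsym : Xᵀ = X) (h1 : -Aᵀ * X - X * A = Lᵀ * L)
    (h2 : C - Bᵀ * X = Wᵀ * L)
    (v : Fin d → ℝ) (hv : X.mulVec v = 0) :
    L.mulVec v = 0 ∧ C.mulVec v = 0 ∧ X.mulVec (A.mulVec v) = 0 := by
  have hL : L.mulVec v = 0 := by
    rw [← dotProduct_self_eq_zero (v := L.mulVec v)]
    have e1 : v ⬝ᵥ ((Lᵀ * L).mulVec v) = (L.mulVec v) ⬝ᵥ (L.mulVec v) := by
      rw [← mulVec_mulVec, dotProduct_mulVec, vecMul_transpose]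
    rw [← e1, ← h1]
    have e2 : (-Aᵀ * X - X * A).mulVec v
        = -(Aᵀ.mulVec (X.mulVec v)) - X.mulVec (A.mulVec v) := by
      rw [sub_mulVec, neg_mul, neg_mulVec, mulVec_mulVec, mulVec_mulVec]
    rw [e2, hv]
    simp only [mulVec_zero, neg_zero, zero_sub, dotProduct_neg]
    have e3 : v ⬝ᵥ X.mulVec (A.mulVec v) = (X.mulVec v) ⬝ᵥ (A.mulVec v) := by
      rw [dotProduct_mulVec, ← hXsym, vecMul_transpose, hXsym]
    rw [e3, hv, zero_dotProduct, neg_zero]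
  refine ⟨hL, ?_, ?_⟩
  · have hC : C = Wᵀ * L + Bᵀ * X := sub_eq_iff_eq_add.mp h2
    have : C.mulVec v = (Wᵀ * L).mulVec v + (Bᵀ * X).mulVec v := by
      rw [hC, add_mulVec]
    rw [this, ← mulVec_mulVec, ← mulVec_mulVec, hL, hv, mulVec_zero, mulVec_zero, add_zero]
  · have hXA : X * A = -Aᵀ * X - Lᵀ * L := by
      rw [neg_mul] at h1 ⊢; rw [← h1]; abel
    rw [mulVec_mulVec, hXA, sub_mulVec, neg_mul, neg_mulVec, ← mulVec_mulVec,
      ← mulVec_mulVec, hv, hL]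
    simp

theorem stmt_9 (d n : ℕ) (A : Matrix (Fin d) (Fin d) ℝ) (B : Matrix (Fin d) (Fin n) ℝ)
    (C : Matrix (Fin n) (Fin d) ℝ)
    (X : Matrix (Fin d) (Fin d) ℝ) (L : Matrix (Fin n) (Fin d) ℝ)
    (W : Matrix (Fin n) (Fin n) ℝ)
    (hX : X.PosSemidef) (h1 : -Aᵀ * X - X * A = Lᵀ * L)
    (h2 : C - Bᵀ * X = Wᵀ * L)
    (z : Fin d → ℝ) (hz : X.mulVec z = 0) :
    ∀ k : ℕ, X.mulVec ((A ^ k).mulVec z) = 0 ∧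
      L.mulVec ((A ^ k).mulVec z) = 0 ∧ C.mulVec ((A ^ k).mulVec z) = 0 := by
  have hXsym : Xᵀ = X := hX.1.eq ▸ hX.1
  have key : ∀ k : ℕ, X.mulVec ((A ^ k).mulVec z) = 0 := by
    intro k
    induction k with
    | zero => simpa using hz
    | succ k ih =>
      have h := aux9 d n A B C X L W hXsym h1 h2 _ ih
      rw [pow_succ', ← mulVec_mulVec]
      exact h.2.2
  intro k
  have h := aux9 d n A B C X L W hXsym h1 h2 _ (key k)
  exact ⟨key k, h.1, h.2.1⟩
end

section
/- Let A ∈ ℝ^{d×d}, B ∈ ℝ^{d×n}, C ∈ ℝ^{n×d}, and let X, L, W be real matrices with X symmetric positive semidefinite, -AᵀX - XA = LᵀL, and C - BᵀX = WᵀL. If (C, A) is observable (i.e., the only z ∈ ℝ^d with C A^k z = 0 for all k ∈ ℕ is z = 0), then X is positive definite. -/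
/-!
Testing the Lyapunov equation `-AᵀX - XA = LᵀL` against a vector `w` with `X w = 0` gives
`|L w|² = -wᵀX(A w) = -(X w)ᵀ(A w) = 0`, hence `L w = 0` and then `X (A w) = 0`. So `ker X` is
`A`-invariant and lies in `ker L`; as `C = WᵀL + BᵀX`, it lies in `ker (C Aᵏ)` for every `k`, and
observability forces `ker X = 0`. A positive semidefinite matrix with trivial kernel is definite.
-/

open Matrix

namespace Matrix

variable {m n R : Type*} [Fintype m] [Fintype n] [CommRing R] [LinearOrder R]
  [IsStrictOrderedRing R] {A X : Matrix n n R} {L : Matrix m n R}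

theorem mulVec_eq_zero_and_mulVec_mulVec_eq_zero_of_lyapunov (hX : X.IsSymm)
    (hlyap : -Aᵀ * X - X * A = Lᵀ * L) {w : n → R} (hw : X *ᵥ w = 0) :
    L *ᵥ w = 0 ∧ X *ᵥ (A *ᵥ w) = 0 := by
  have hLL : (Lᵀ * L) *ᵥ w = -(X *ᵥ (A *ᵥ w)) := by
    rw [← hlyap, sub_mulVec, Matrix.neg_mul, neg_mulVec, ← mulVec_mulVec, ← mulVec_mulVec, hw,
      mulVec_zero, neg_zero, zero_sub]
  have hLw : L *ᵥ w = 0 := by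
    rw [← dotProduct_self_eq_zero]
    calc L *ᵥ w ⬝ᵥ L *ᵥ w = w ⬝ᵥ (Lᵀ * L) *ᵥ w := by
          rw [← mulVec_mulVec, dotProduct_transpose_mulVec]
      _ = -(w ⬝ᵥ Xᵀ *ᵥ (A *ᵥ w)) := by rw [hLL, dotProduct_neg, hX.eq]
      _ = 0 := by rw [dotProduct_transpose_mulVec, hw, dotProduct_zero, neg_zero]
  refine ⟨hLw, ?_⟩
  rwa [← mulVec_mulVec, hLw, mulVec_zero, eq_comm, neg_eq_zero] at hLL

theorem mulVec_pow_mulVec_eq_zero_of_lyapunov [DecidableEq n] (hX : X.IsSymm)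
    (hlyap : -Aᵀ * X - X * A = Lᵀ * L) {w : n → R} (hw : X *ᵥ w = 0) (k : ℕ) :
    X *ᵥ ((A ^ k) *ᵥ w) = 0 := by
  induction k with
  | zero => rwa [pow_zero, one_mulVec]
  | succ k ih =>
    rw [pow_succ', ← mulVec_mulVec]
    exact (mulVec_eq_zero_and_mulVec_mulVec_eq_zero_of_lyapunov hX hlyap ih).2

end Matrix

open scoped ComplexOrder in
theorem Matrix.PosSemidef.posDef_of_mulVec_injective {n 𝕜 : Type*} [Fintype n] [RCLike 𝕜]
    {X : Matrix n n 𝕜} (hX : X.PosSemidef) (hker : ∀ z, X *ᵥ z = 0 → z = 0) : X.PosDef := by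
  classical
  rw [hX.posDef_iff_det_ne_zero, Ne, ← exists_mulVec_eq_zero_iff]
  rintro ⟨z, hz, hXz⟩
  exact hz (hker z hXz)

theorem stmt_10 (d n : ℕ) (A : Matrix (Fin d) (Fin d) ℝ) (B : Matrix (Fin d) (Fin n) ℝ)
    (C : Matrix (Fin n) (Fin d) ℝ)
    (X : Matrix (Fin d) (Fin d) ℝ) (L : Matrix (Fin n) (Fin d) ℝ)
    (W : Matrix (Fin n) (Fin n) ℝ)
    (hX : X.PosSemidef) (h1 : -Aᵀ * X - X * A = Lᵀ * L)
    (h2 : C - Bᵀ * X = Wᵀ * L)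
    (hobs : ∀ z : Fin d → ℝ, (∀ k : ℕ, C.mulVec ((A ^ k).mulVec z) = 0) → z = 0) :
    X.PosDef := by
  have hsymm : X.IsSymm := isHermitian_iff_isSymm.mp hX.isHermitian
  refine hX.posDef_of_mulVec_injective fun z hz => hobs z fun k => ?_
  have hXk := mulVec_pow_mulVec_eq_zero_of_lyapunov hsymm h1 hz k
  have hLk := (mulVec_eq_zero_and_mulVec_mulVec_eq_zero_of_lyapunov hsymm h1 hXk).1
  rw [sub_eq_iff_eq_add.mp h2, add_mulVec, ← mulVec_mulVec, ← mulVec_mulVec, hLk, hXk,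
    mulVec_zero, mulVec_zero, add_zero]
end
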